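/- For every nonnegative integer n, $\frac{E_n(x+iy)+E_n(x-iy)}{2}=\sum_{m=0}^{\lfloor n/2\rfloor}\binom{n}{2m}E_{n-2m}(x)(-1)^m y^{2m}$, where $E_n(z)$ are the type 2 Euler polynomials of a complex variable. -/

import Mathlib

/-!
The generating function makes `E` an Appell sequence: dividing by `e^{t/2} + e^{-t/2}` gives
`Σ E_n(z + w) tⁿ/n! = e^{wt} Σ E_n(z) tⁿ/n!`, i.e. `E_n(z + w) = Σ_k C(n,k) E_{n-k}(z) w^k`.
Adding the cases `w = iy` and `w = -iy`, the odd powers cancel and `(iy)^{2m} = (-1)^m y^{2m}`.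
-/

open PowerSeries Finset Complex

/-- The degenerate falling factorial `(x)_{n,λ} = x(x-λ)⋯(x-(n-1)λ)`. -/
noncomputable def dff (l x : ℂ) (n : ℕ) : ℂ := ∏ j ∈ Finset.range n, (x - j * l)

/-- Exponential generating function of a sequence: `Σ f n * t^n / n!`. -/
noncomputable def egf (f : ℕ → ℂ) : PowerSeries ℂ := PowerSeries.mk fun n => f n / n.factorial

/-- The degenerate exponential `e_λ^x(t) = (1+λt)^{x/λ} = Σ (x)_{n,λ} t^n/n!` as a power series. -/
noncomputable def degExp (l x : ℂ) : PowerSeries ℂ := egf (dff l x)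

/-- The degenerate cosine `cos_λ^{(y)}(t) = cos((y/λ) log(1+λt)) = (e_λ^{iy}(t)+e_λ^{-iy}(t))/2`. -/
noncomputable def degCos (l y : ℂ) : PowerSeries ℂ :=
  PowerSeries.C (1/2 : ℂ) * (degExp l (Complex.I * y) + degExp l (-(Complex.I * y)))

/-- The degenerate sine `sin_λ^{(y)}(t) = sin((y/λ) log(1+λt)) = (e_λ^{iy}(t)-e_λ^{-iy}(t))/(2i)`. -/
noncomputable def degSin (l y : ℂ) : PowerSeries ℂ :=
  PowerSeries.C (1/(2*Complex.I) : ℂ) * (degExp l (Complex.I * y) - degExp l (-(Complex.I * y)))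

/-- The exponential series `e^{at} = Σ a^n t^n/n!`. -/
noncomputable def expS (a : ℂ) : PowerSeries ℂ := egf (fun n => a ^ n)

/-- The series of `log(1+t)`. -/
noncomputable def logS : PowerSeries ℂ := PowerSeries.mk fun n => if n = 0 then 0 else (-1)^(n+1) / n

lemma coeff_egf (f : ℕ → ℂ) (n : ℕ) : coeff n (egf f) = f n / n.factorial :=
  coeff_mk _ _

lemma egf_injective : Function.Injective egf := by
  intro f g h
  funext n
  have := congrArg (coeff n) h
  rwa [coeff_egf, coeff_egf, div_left_inj' (by exact_mod_cast n.factorial_ne_zero)] at this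

lemma egf_mul (f g : ℕ → ℂ) :
    egf f * egf g = egf fun n => ∑ k ∈ range (n + 1), n.choose k * f k * g (n - k) := by
  ext n
  rw [coeff_mul, Nat.sum_antidiagonal_eq_sum_range_succ_mk, coeff_egf, sum_div]
  refine sum_congr rfl fun k hk => ?_
  have hn : (n.factorial : ℂ) ≠ 0 := by exact_mod_cast n.factorial_ne_zero
  rw [coeff_egf, coeff_egf, Nat.cast_choose ℂ (Nat.lt_succ_iff.mp (mem_range.mp hk))]
  field_simp

lemma expS_eq_rescale_exp (a : ℂ) : expS a = rescale a (PowerSeries.exp ℂ) := by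
  ext n
  rw [coeff_rescale, PowerSeries.coeff_exp, expS, coeff_egf]
  simp [div_eq_mul_inv, mul_comm]

lemma expS_add (a b : ℂ) : expS (a + b) = expS a * expS b := by
  simp only [expS_eq_rescale_exp, PowerSeries.exp_mul_exp_eq_exp_add]

lemma constantCoeff_expS (a : ℂ) : constantCoeff (expS a) = 1 := by
  simp [← coeff_zero_eq_constantCoeff_apply, expS, coeff_egf]

section Appell

variable {E : ℂ → ℕ → ℂ} {D F : PowerSeries ℂ}

lemma egf_apply_add (hD : D ≠ 0) (hE : ∀ z, egf (E z) * D = F * expS z) (z w : ℂ) :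
    egf (E (z + w)) = expS w * egf (E z) := by
  apply mul_right_cancel₀ hD
  rw [hE, expS_add, mul_assoc, hE]
  ring

lemma apply_add_eq_sum (hD : D ≠ 0) (hE : ∀ z, egf (E z) * D = F * expS z) (z w : ℂ) (n : ℕ) :
    E (z + w) n = ∑ k ∈ range (n + 1), n.choose k * E z (n - k) * w ^ k := by
  have h : egf (E (z + w)) = egf fun n => ∑ k ∈ range (n + 1), n.choose k * w ^ k * E z (n - k) := by
    rw [egf_apply_add hD hE, expS, egf_mul]
  simp only [congrFun (egf_injective h) n, mul_right_comm _ (w ^ _)]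

end Appell

lemma sum_mul_pow_add_neg_pow {R : Type*} [CommRing R] (f : ℕ → R) (w : R) (n : ℕ) :
    ∑ k ∈ range (n + 1), f k * (w ^ k + (-w) ^ k) =
      2 * ∑ m ∈ range (n / 2 + 1), f (2 * m) * w ^ (2 * m) := by
  have even_of_ne_zero : ∀ k ∈ range (n + 1), f k * (w ^ k + (-w) ^ k) ≠ 0 → Even k := by
    intro k _ hne
    by_contra hk
    rw [Nat.not_even_iff_odd.mp hk |>.neg_pow, add_neg_cancel, mul_zero] at hne
    exact hne rfl
  have filter_even_eq_image : (range (n + 1)).filter Even = (range (n / 2 + 1)).image (2 * ·) := by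
    ext k
    simp only [mem_filter, mem_range, mem_image]
    constructor
    · rintro ⟨hk, r, rfl⟩
      exact ⟨r, by omega, by omega⟩
    · rintro ⟨m, hm, rfl⟩
      exact ⟨by omega, m, by omega⟩
  rw [← sum_filter_of_ne even_of_ne_zero, filter_even_eq_image, sum_image (fun a _ b _ h => by omega), mul_sum]
  refine sum_congr rfl fun m _ => ?_
  rw [(even_two_mul m).neg_pow]
  ring

theorem stmt16 (x y : ℝ) (E : ℂ → ℕ → ℂ)
    (hE : ∀ z : ℂ, egf (E z) * (expS (1/2) + expS (-(1/2))) = 2 * expS z)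
    (n : ℕ) :
    (E ((x:ℂ) + Complex.I * y) n + E ((x:ℂ) - Complex.I * y) n) / 2 =
      ∑ m ∈ Finset.range (n/2+1), (n.choose (2*m) : ℂ) * E x (n-2*m) * (-1)^m * (y:ℂ)^(2*m) := by
  have hD : expS (1/2) + expS (-(1/2)) ≠ 0 := fun h => by
    simpa [constantCoeff_expS] using congrArg constantCoeff h
  rw [sub_eq_add_neg, apply_add_eq_sum hD hE, apply_add_eq_sum hD hE, ← sum_add_distrib]
  simp_rw [← mul_add]
  rw [sum_mul_pow_add_neg_pow, mul_div_cancel_left₀ _ two_ne_zero]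
  refine sum_congr rfl fun m _ => ?_
  rw [pow_mul, mul_pow, I_sq, pow_mul]
  ring
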